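/- Coverage of high-severity contingencies (corrected form): let μ and ν be probability measures on a measurable space with KL(μ‖ν) ≤ ε, let A be a measurable set with μ(A) = δ, and set q := δ − √(ε/2), assumed strictly positive. Let (Z_1, …, Z_m) be i.i.d. samples drawn from ν, and let N := #{i ≤ m : Z_i ∈ A}. Then for any η ∈ (0,1), P(N ≥ (1−η) m q) ≥ 1 − exp(−η² m q / 2). -/

import Mathlib

/-!
Taking `f = t • 1_A` in the Donsker–Varadhan inequality and bounding `log 𝔼_ν[exp f]` by
Hoeffding's lemma gives `t (μ A - ν A) - t² / 8 ≤ KL(μ‖ν)` for every `t`; at `t = 4 (μ A - ν A)`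
this is Pinsker's inequality for the event `A`, so `ν A ≥ δ - √(ε/2) = q`. The count `N` is a sum
of `m` independent indicators of success probability `ν A ≥ q`, and the Chernoff bound at
`t = log (1 - η)` gives `P(N ≤ (1 - η) m q) ≤ exp (-m q klFun (1 - η)) ≤ exp (-η² m q / 2)`.
-/

open MeasureTheory
open scoped ENNReal Classical

/-- The Kullback–Leibler divergence of `μ` from `ν`: equal to `∫ log (dμ/dν) dμ`
when `μ` is absolutely continuous with respect to `ν` (and the log-likelihood ratio
is integrable), and `+∞` otherwise. -/
noncomputable def klDiv {Ω : Type*} [MeasurableSpace Ω] (μ ν : Measure Ω) : ℝ≥0∞ :=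
  if μ ≪ ν ∧ Integrable (llr μ ν) μ then ENNReal.ofReal (∫ x, llr μ ν x ∂μ) else ⊤

open Real ProbabilityTheory

namespace MeasureTheory

variable {Ω : Type*} [MeasurableSpace Ω] {μ ν : Measure Ω}
  [IsProbabilityMeasure μ] [IsProbabilityMeasure ν]

/-- Donsker–Varadhan: this is Gibbs' inequality for `μ` against `ν.tilted f`. -/
lemma integral_sub_log_integral_exp_le_integral_llr (hμν : μ ≪ ν)
    (h_int : Integrable (llr μ ν) μ) {f : Ω → ℝ} (hfμ : Integrable f μ)
    (hfν : Integrable (fun x ↦ exp (f x)) ν) :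
    ∫ x, f x ∂μ - log (∫ x, exp (f x) ∂ν) ≤ ∫ x, llr μ ν x ∂μ := by
  have := isProbabilityMeasure_tilted hfν
  have hgibbs := InformationTheory.integral_llr_add_sub_measure_univ_nonneg
    (hμν.trans (absolutelyContinuous_tilted hfν)) (integrable_llr_tilted_right hμν hfμ h_int hfν)
  rw [integral_llr_tilted_right hμν hfμ hfν h_int] at hgibbs
  simp only [probReal_univ] at hgibbs
  linarith

lemma mul_integral_sub_integral_le_integral_llr (hμν : μ ≪ ν)
    (h_int : Integrable (llr μ ν) μ) {X : Ω → ℝ} (hX : Measurable X) {a b : ℝ}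
    (hXab : ∀ᵐ x ∂ν, X x ∈ Set.Icc a b) (t : ℝ) :
    t * (∫ x, X x ∂μ - ∫ x, X x ∂ν) ≤ ∫ x, llr μ ν x ∂μ + (b - a) ^ 2 * t ^ 2 / 8 := by
  have hoeffding := hasSubgaussianMGF_of_mem_Icc hX.aemeasurable hXab
  have hXμ : Integrable X μ := Integrable.of_mem_Icc a b hX.aemeasurable (hμν.ae_le hXab)
  have hdv := integral_sub_log_integral_exp_le_integral_llr hμν h_int
    (f := fun x ↦ t * (X x - ∫ y, X y ∂ν)) ((hXμ.sub (integrable_const _)).const_mul t)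
    (hoeffding.integrable_exp_mul t)
  have hmgf : log (∫ x, exp (t * (X x - ∫ y, X y ∂ν)) ∂ν) ≤ (b - a) ^ 2 * t ^ 2 / 8 := by
    refine (Real.log_le_iff_le_exp (mgf_pos (hoeffding.integrable_exp_mul t))).2 ?_
    refine (hoeffding.mgf_le t).trans_eq ?_
    congr 1
    simp only [NNReal.coe_pow, NNReal.coe_div, coe_nnnorm, Real.norm_eq_abs, NNReal.coe_ofNat]
    rw [div_pow, sq_abs]
    ring
  rw [integral_const_mul, integral_sub hXμ (integrable_const _)] at hdv
  simp only [integral_const, probReal_univ, smul_eq_mul, one_mul] at hdv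
  linarith

lemma two_mul_sq_measureReal_sub_le_integral_llr (hμν : μ ≪ ν)
    (h_int : Integrable (llr μ ν) μ) {A : Set Ω} (hA : MeasurableSet A) :
    2 * (μ.real A - ν.real A) ^ 2 ≤ ∫ x, llr μ ν x ∂μ := by
  have hbound := mul_integral_sub_integral_le_integral_llr hμν h_int
    (measurable_const.indicator hA) (a := 0) (b := 1)
    (ae_of_all _ fun x ↦ ⟨Set.indicator_nonneg (fun _ _ ↦ zero_le_one) x,
      Set.indicator_le_self' (fun _ _ ↦ zero_le_one) x⟩) (4 * (μ.real A - ν.real A))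
  simp only [integral_indicator_const _ hA, smul_eq_mul, mul_one] at hbound
  nlinarith

end MeasureTheory

namespace InformationTheory

lemma one_sub_sq_div_two_le_klFun {x : ℝ} (hx₀ : 0 ≤ x) (hx₁ : x ≤ 1) :
    (1 - x) ^ 2 / 2 ≤ klFun x := by
  have hanti : AntitoneOn (klFun - fun y ↦ (1 - y) ^ 2 / 2) (Set.Icc 0 1) := by
    refine antitoneOn_of_deriv_nonpos (convex_Icc 0 1)
      (continuous_klFun.sub (by fun_prop)).continuousOn ?_ ?_
    all_goals
      rw [interior_Icc]
      intro y hy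
      have hsq : HasDerivAt (fun y : ℝ ↦ (1 - y) ^ 2 / 2) (-(1 - y)) y :=
        ((((hasDerivAt_id' y).const_sub 1).pow 2).div_const 2).congr_deriv (by ring)
      have hderiv := (hasDerivAt_klFun hy.1.ne').sub hsq
    · exact hderiv.differentiableAt.differentiableWithinAt
    · rw [hderiv.deriv]
      linarith [Real.log_le_sub_one_of_pos hy.1]
  have := hanti ⟨hx₀, hx₁⟩ ⟨zero_le_one, le_rfl⟩ hx₁
  simp only [Pi.sub_apply, klFun_one, sub_self] at this
  linarith

end InformationTheory

namespace ProbabilityTheory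

variable {Ω : Type*} [MeasurableSpace Ω] {ν : Measure Ω}

lemma mgf_sum_comp_eval_pi {ι : Type*} [Fintype ι] [SigmaFinite ν] (X : Ω → ℝ) (t : ℝ) :
    mgf (fun ω : ι → Ω ↦ ∑ i, X (ω i)) (Measure.pi fun _ ↦ ν) t = mgf X ν t ^ Fintype.card ι := by
  simp only [mgf, Finset.mul_sum, Real.exp_sum]
  exact integral_fintype_prod_eq_pow (fun x ↦ exp (t * X x))

lemma mgf_indicator_one [IsProbabilityMeasure ν] {A : Set Ω} (hA : MeasurableSet A) (t : ℝ) :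
    mgf (A.indicator fun _ ↦ (1 : ℝ)) ν t = 1 + ν.real A * (exp t - 1) := by
  have hpt : ∀ x, exp (t * A.indicator (fun _ ↦ (1 : ℝ)) x)
      = 1 + A.indicator (fun _ ↦ exp t - 1) x := by
    intro x
    by_cases hx : x ∈ A <;> simp [hx]
  simp only [mgf, hpt]
  rw [integral_add (integrable_const _) ((integrable_const _).indicator hA),
    integral_indicator_const _ hA]
  simp

lemma measureReal_sum_indicator_le_le [IsProbabilityMeasure ν] {ι : Type*} [Fintype ι]
    {A : Set Ω} (hA : MeasurableSet A) {q η : ℝ} (hq : 0 ≤ q) (hqA : q ≤ ν.real A)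
    (hη₀ : 0 ≤ η) (hη₁ : η < 1) :
    (Measure.pi fun _ : ι ↦ ν).real
        {ω | ∑ i, A.indicator (fun _ ↦ (1 : ℝ)) (ω i) ≤ (1 - η) * Fintype.card ι * q} ≤
      exp (-(η ^ 2 * Fintype.card ι * q) / 2) := by
  set S : (ι → Ω) → ℝ := fun ω ↦ ∑ i, A.indicator (fun _ ↦ (1 : ℝ)) (ω i)
  have hS : 0 ≤ S := fun ω ↦ Finset.sum_nonneg fun i _ ↦ Set.indicator_nonneg (by simp) _
  -- the optimal Chernoff parameter when `ν A = q`
  set t := log (1 - η) with ht_def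
  have ht : t ≤ 0 := log_nonpos (by linarith) (by linarith)
  have hexp_t : exp t = 1 - η := exp_log (by linarith)
  have h_int : Integrable (fun ω ↦ exp (t * S ω)) (Measure.pi fun _ : ι ↦ ν) := by
    refine Integrable.of_bound (by fun_prop) 1 (ae_of_all _ fun ω ↦ ?_)
    rw [Real.norm_of_nonneg (exp_pos _).le, exp_le_one_iff]
    exact mul_nonpos_of_nonpos_of_nonneg ht (hS ω)
  have hmgf : mgf S (Measure.pi fun _ : ι ↦ ν) t ≤ exp (-(η * q)) ^ Fintype.card ι := by
    rw [mgf_sum_comp_eval_pi, mgf_indicator_one hA, hexp_t]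
    have hA1 : ν.real A ≤ 1 := measureReal_le_one
    gcongr
    · nlinarith
    · nlinarith [add_one_le_exp (-(η * q))]
  calc _ ≤ exp (-t * ((1 - η) * Fintype.card ι * q)) * mgf S (Measure.pi fun _ : ι ↦ ν) t :=
        measure_le_le_exp_mul_mgf _ ht h_int
    _ ≤ exp (-t * ((1 - η) * Fintype.card ι * q)) * exp (-(η * q)) ^ Fintype.card ι := by gcongr
    _ = exp (-(Fintype.card ι * q * InformationTheory.klFun (1 - η))) := by
        rw [← exp_nat_mul, ← exp_add, InformationTheory.klFun, ← ht_def]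
        ring_nf
    _ ≤ exp (-(η ^ 2 * Fintype.card ι * q) / 2) := by
        have := InformationTheory.one_sub_sq_div_two_le_klFun (x := 1 - η) (by linarith)
          (by linarith)
        gcongr
        nlinarith [mul_nonneg (Nat.cast_nonneg (α := ℝ) (Fintype.card ι)) hq]

end ProbabilityTheory

lemma measureReal_le_add_sqrt_of_klDiv_le {Ω : Type*} [MeasurableSpace Ω] {μ ν : Measure Ω}
    [IsProbabilityMeasure μ] [IsProbabilityMeasure ν] {ε : ℝ}
    (hKL : klDiv μ ν ≤ ENNReal.ofReal ε) {A : Set Ω} (hA : MeasurableSet A) :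
    μ.real A ≤ ν.real A + √(ε / 2) := by
  obtain ⟨hμν, h_int⟩ : μ ≪ ν ∧ Integrable (llr μ ν) μ := by
    by_contra h
    rw [klDiv, if_neg h, top_le_iff] at hKL
    exact ENNReal.ofReal_ne_top hKL
  rw [klDiv, if_pos ⟨hμν, h_int⟩, ENNReal.ofReal_le_ofReal_iff'] at hKL
  have pinsker := two_mul_sq_measureReal_sub_le_integral_llr hμν h_int hA
  have hsq : (μ.real A - ν.real A) ^ 2 ≤ ε / 2 ∨ μ.real A - ν.real A = 0 := by
    rcases hKL with hKL | hKL
    · left; linarith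
    · right; nlinarith
  rcases hsq with hsq | hsq
  · linarith [le_abs_self (μ.real A - ν.real A), Real.abs_le_sqrt hsq]
  · linarith [Real.sqrt_nonneg (ε / 2)]

/-- Coverage of high-severity contingencies: if `KL(μ‖ν) ≤ ε`, `μ(A) = δ`, and
`q := δ − √(ε/2) > 0`, then for `m` i.i.d. samples `Z₁,…,Z_m ∼ ν` and
`N := #{i : Z_i ∈ A}`, for any `η ∈ (0,1)` we have
`P(N ≥ (1−η) m q) ≥ 1 − exp(−η² m q / 2)`. -/
theorem coverage_of_high_severity {Ω : Type*} [MeasurableSpace Ω]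
    (μ ν : Measure Ω) [IsProbabilityMeasure μ] [IsProbabilityMeasure ν]
    (ε : ℝ) (hKL : klDiv μ ν ≤ ENNReal.ofReal ε)
    (δ : ℝ) (A : Set Ω) (hA : MeasurableSet A) (hμA : μ A = ENNReal.ofReal δ)
    (q : ℝ) (hq : q = δ - Real.sqrt (ε / 2)) (hqpos : 0 < q)
    (m : ℕ) (η : ℝ) (hη : η ∈ Set.Ioo (0 : ℝ) 1) :
    ENNReal.ofReal (1 - Real.exp (-(η ^ 2 * (m : ℝ) * q) / 2)) ≤
      (Measure.pi fun _ : Fin m => ν)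
        {ω | (1 - η) * (m : ℝ) * q ≤ ∑ i, A.indicator (fun _ => (1 : ℝ)) (ω i)} := by
  have hμA_real : μ.real A = δ := by
    rw [measureReal_def, hμA, ENNReal.toReal_ofReal (by linarith [Real.sqrt_nonneg (ε / 2)])]
  have hqA : q ≤ ν.real A := by linarith [measureReal_le_add_sqrt_of_klDiv_le hKL hA]
  have htail := measureReal_sum_indicator_le_le (ι := Fin m) hA hqpos.le hqA hη.1.le hη.2
  rw [Fintype.card_fin] at htail
  set E := {ω : Fin m → Ω | (1 - η) * (m : ℝ) * q ≤ ∑ i, A.indicator (fun _ => (1 : ℝ)) (ω i)}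
  have hE : MeasurableSet E :=
    measurableSet_le measurable_const <| Finset.measurable_sum _ fun i _ ↦
      (measurable_const.indicator hA).comp (measurable_pi_apply i)
  have hEc : Eᶜ ⊆ {ω | ∑ i, A.indicator (fun _ => (1 : ℝ)) (ω i) ≤ (1 - η) * m * q} :=
    fun _ hω ↦ (not_le.1 (Set.notMem_ofPred_iff.1 hω)).le
  rw [← ofReal_measureReal]
  refine ENNReal.ofReal_le_ofReal ?_
  linarith [probReal_compl_eq_one_sub (μ := Measure.pi fun _ : Fin m => ν) hE,
    measureReal_mono (μ := Measure.pi fun _ : Fin m => ν) hEc]
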